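/- arXiv:2007.07671 — 5 statements merged into one kernel-verified Lean document; each statement's English description precedes it below -/
import Mathlib

section
/- Let V be a real vector space and S : V × V → ℝ a symmetric bilinear form. Let s ∈ ℕ, let a : Fin s → Fin s → ℝ and b : Fin s → ℝ be Runge–Kutta coefficients satisfying the symplecticity condition b i * a i j + b j * a j i = b i * b j for all i, j. Let τ ∈ ℝ, let y₀ ∈ V, and let Y, K : Fin s → V satisfy the stage relations Y i = y₀ + τ • Σ_j a i j • K j for all i, together with the stage orthogonality S (K i) (Y i) = 0 for all i. Set y₁ = y₀ + τ • Σ_i b i • K i. Then S y₁ y₁ = S y₀ y₀. -/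
open Finset

section QuadraticIncrement

variable {R M ι : Type*} [CommRing R] [AddCommGroup M] [Module R M] [Fintype ι]
  {S : M →ₗ[R] M →ₗ[R] R}

lemma sum_sum_transpose_mul_apply (hS : ∀ v w, S v w = S w v) (c : ι → ι → R) (K : ι → M) :
    ∑ i, ∑ j, c j i * S (K i) (K j) = ∑ i, ∑ j, c i j * S (K i) (K j) := by
  rw [sum_comm]
  exact sum_congr rfl fun i _ => sum_congr rfl fun j _ => by rw [hS]

/-- Hairer–Lubich–Wanner, *Geometric Numerical Integration*, proof of Theorem IV.2.2. -/
theorem rungeKutta_quadratic_increment (hS : ∀ v w, S v w = S w v)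
    (a : ι → ι → R) (b : ι → R) (τ : R) (y₀ : M) (Y K : ι → M)
    (hY : ∀ i, Y i = y₀ + τ • ∑ j, a i j • K j) :
    S (y₀ + τ • ∑ i, b i • K i) (y₀ + τ • ∑ i, b i • K i) =
      S y₀ y₀ + 2 * τ * ∑ i, b i * S (K i) (Y i) +
        τ ^ 2 * ∑ i, ∑ j, (b i * b j - b i * a i j - b j * a j i) * S (K i) (K j) := by
  set Δ := ∑ i, b i • K i
  have hexpand : S (y₀ + τ • Δ) (y₀ + τ • Δ) = S y₀ y₀ + 2 * τ * S Δ y₀ + τ ^ 2 * S Δ Δ := by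
    simp only [map_add, map_smul, LinearMap.add_apply, LinearMap.smul_apply, smul_eq_mul, hS y₀]
    ring
  have hstage : ∑ i, b i * S (K i) (Y i) =
      S Δ y₀ + τ * ∑ i, ∑ j, b i * a i j * S (K i) (K j) := by
    simp only [Δ, hY, map_add, map_smul, map_sum, LinearMap.sum_apply, LinearMap.smul_apply,
      smul_eq_mul, mul_add, sum_add_distrib, mul_sum]
    exact congrArg _ (sum_congr rfl fun i _ => sum_congr rfl fun j _ => by ring)
  have hΔΔ : S Δ Δ = ∑ i, ∑ j, b i * b j * S (K i) (K j) := by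
    simp only [Δ, map_sum, map_smul, LinearMap.sum_apply, LinearMap.smul_apply, smul_eq_mul,
      mul_sum]
    rw [sum_comm]
    exact sum_congr rfl fun i _ => sum_congr rfl fun j _ => by ring
  have hswap := sum_sum_transpose_mul_apply hS (fun i j => b i * a i j) K
  simp only [sub_mul, sum_sub_distrib]
  rw [hexpand, hstage, hΔΔ, hswap]
  ring

end QuadraticIncrement

/-- Algebraic core of quadratic-invariant preservation by symplectic Runge–Kutta methods:
if the RK coefficients satisfy `b i * a i j + b j * a j i = b i * b j`, the stages satisfy
the stage relations and the stage orthogonality `S (K i) (Y i) = 0`, then the update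
preserves the quadratic form `S y y`. -/
theorem symplectic_RK_quadratic_invariant
    {V : Type*} [AddCommGroup V] [Module ℝ V]
    (S : V →ₗ[ℝ] V →ₗ[ℝ] ℝ) (hS : ∀ v w : V, S v w = S w v)
    (s : ℕ) (a : Fin s → Fin s → ℝ) (b : Fin s → ℝ)
    (hsymp : ∀ i j, b i * a i j + b j * a j i = b i * b j)
    (τ : ℝ) (y₀ : V) (Y K : Fin s → V)
    (hY : ∀ i, Y i = y₀ + τ • ∑ j, a i j • K j)
    (horth : ∀ i, S (K i) (Y i) = 0)
    (y₁ : V) (hy₁ : y₁ = y₀ + τ • ∑ i, b i • K i) :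
    S y₁ y₁ = S y₀ y₀ := by
  have hcoeff : ∀ i j, b i * b j - b i * a i j - b j * a j i = 0 := fun i j => by
    linear_combination -(hsymp i j)
  rw [hy₁, rungeKutta_quadratic_increment hS a b τ y₀ Y K hY]
  simp [horth, hcoeff]
end

section
/- Let V be a real inner product space, S : V × V → ℝ a symmetric bilinear form, and f : ℝ × V → V a map such that S (f t y) y = 0 for all t ∈ ℝ and y ∈ V. Let a : Fin s → Fin s → ℝ, b : Fin s → ℝ be Runge–Kutta coefficients satisfying b i * a i j + b j * a j i = b i * b j for all i, j, and set c i = Σ_j a i j. Let τ, t₀ ∈ ℝ, let y₀ ∈ V, and suppose the stage values Y : Fin s → V satisfy Y i = y₀ + τ • Σ_j a i j • f (t₀ + c j * τ) (Y j) for all i. Define y₁ = y₀ + τ • Σ_i b i • f (t₀ + c i * τ) (Y i). Then S y₁ y₁ = S y₀ y₀, i.e. the Runge–Kutta step preserves the quadratic quantity S y y of the (possibly nonautonomous) ODE y' = f(t, y). -/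
/-!
Write `k i` for the stage derivatives, so that `Y i = y₀ + τ ∑ⱼ aᵢⱼ kⱼ` and
`y₁ = y₀ + τ ∑ᵢ bᵢ kᵢ`. Expanding `S y₁ y₁` and eliminating `S kᵢ y₀` through the stage equations
gives, for any symmetric bilinear `S`,
`S y₁ y₁ = S y₀ y₀ + 2τ ∑ᵢ bᵢ S kᵢ Yᵢ - τ² ∑ᵢⱼ mᵢⱼ S kᵢ kⱼ` with `mᵢⱼ = bᵢaᵢⱼ + bⱼaⱼᵢ - bᵢbⱼ`.
The invariant makes every `S kᵢ Yᵢ` vanish and symplecticity makes every `mᵢⱼ` vanish.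
-/

open Finset

section

variable {R M : Type*} [CommRing R] [AddCommGroup M] [Module R M] {s : ℕ}

namespace LinearMap

lemma apply_add_add_of_symm (S : M →ₗ[R] M →ₗ[R] R) (hS : ∀ v w, S v w = S w v) (x u : M) :
    S (x + u) (x + u) = S x x + 2 * S u x + S u u := by
  simp only [map_add, add_apply, hS x u]
  ring

lemma apply_sum_smul_sum_smul (S : M →ₗ[R] M →ₗ[R] R) (x y : Fin s → R) (k : Fin s → M) :
    S (∑ i, x i • k i) (∑ j, y j • k j) = ∑ i, ∑ j, x i * y j * S (k i) (k j) := by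
  simp only [map_sum, map_smul, sum_apply, smul_apply, smul_eq_mul, mul_sum]
  rw [sum_comm]
  exact sum_congr rfl fun i _ => sum_congr rfl fun j _ => by ring

lemma sum_sum_mul_apply_transpose_of_symm (S : M →ₗ[R] M →ₗ[R] R) (hS : ∀ v w, S v w = S w v)
    (m : Fin s → Fin s → R) (k : Fin s → M) :
    ∑ i, ∑ j, m j i * S (k i) (k j) = ∑ i, ∑ j, m i j * S (k i) (k j) := by
  rw [sum_comm]
  exact sum_congr rfl fun i _ => sum_congr rfl fun j _ => by rw [hS]

end LinearMap

/-- Both the stage values (`w = a i`) and the new value (`w = b`) of a Runge–Kutta step with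
stage derivatives `k` have this form. -/
def rkStep (τ : R) (y₀ : M) (w : Fin s → R) (k : Fin s → M) : M :=
  y₀ + τ • ∑ i, w i • k i

def symplecticDefect (a : Fin s → Fin s → R) (b : Fin s → R) (i j : Fin s) : R :=
  b i * a i j + b j * a j i - b i * b j

lemma LinearMap.apply_rkStep_self (S : M →ₗ[R] M →ₗ[R] R) (hS : ∀ v w, S v w = S w v)
    (a : Fin s → Fin s → R) (b : Fin s → R) (τ : R) (y₀ : M) (k : Fin s → M) :
    S (rkStep τ y₀ b k) (rkStep τ y₀ b k) =
      S y₀ y₀ + 2 * τ * ∑ i, b i * S (k i) (rkStep τ y₀ (a i) k)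
        - τ ^ 2 * ∑ i, ∑ j, symplecticDefect a b i j * S (k i) (k j) := by
  have hstage : ∀ i, S (k i) y₀ =
      S (k i) (rkStep τ y₀ (a i) k) - τ * ∑ j, a i j * S (k i) (k j) := by
    intro i
    simp only [rkStep, map_add, map_smul, map_sum, smul_eq_mul]
    ring
  have hcross : S (τ • ∑ i, b i • k i) y₀ = τ * (∑ i, b i * S (k i) (rkStep τ y₀ (a i) k)
      - τ * ∑ i, ∑ j, b i * a i j * S (k i) (k j)) := by
    simp only [map_smul, map_sum, smul_apply, sum_apply, smul_eq_mul, hstage, mul_sub,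
      sum_sub_distrib, mul_sum]
    ring_nf
  have hquad : S (τ • ∑ i, b i • k i) (τ • ∑ i, b i • k i)
      = τ ^ 2 * ∑ i, ∑ j, b i * b j * S (k i) (k j) := by
    rw [map_smul, map_smul, smul_apply, S.apply_sum_smul_sum_smul, smul_eq_mul, smul_eq_mul]
    ring
  have hdefect : ∑ i, ∑ j, symplecticDefect a b i j * S (k i) (k j)
      = 2 * ∑ i, ∑ j, b i * a i j * S (k i) (k j) - ∑ i, ∑ j, b i * b j * S (k i) (k j) := by
    simp only [symplecticDefect, sub_mul, add_mul, sum_sub_distrib, sum_add_distrib,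
      S.sum_sum_mul_apply_transpose_of_symm hS (fun i j => b i * a i j) k]
    ring
  rw [rkStep, S.apply_add_add_of_symm hS, hcross, hquad, hdefect]
  ring

end

theorem symplectic_RK_preserves_quadratic_invariant_ODE_general
    {V : Type*} [NormedAddCommGroup V] [InnerProductSpace ℝ V]
    (S : V →ₗ[ℝ] V →ₗ[ℝ] ℝ) (hS : ∀ v w : V, S v w = S w v)
    (f : ℝ × V → V) (hf : ∀ (t : ℝ) (y : V), S (f (t, y)) y = 0)
    (s : ℕ) (a : Fin s → Fin s → ℝ) (b : Fin s → ℝ)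
    (hsymp : ∀ i j, b i * a i j + b j * a j i = b i * b j)
    (c : Fin s → ℝ)
    (τ t₀ : ℝ) (y₀ : V) (Y : Fin s → V)
    (hY : ∀ i, Y i = y₀ + τ • ∑ j, a i j • f (t₀ + c j * τ, Y j))
    (y₁ : V) (hy₁ : y₁ = y₀ + τ • ∑ i, b i • f (t₀ + c i * τ, Y i)) :
    S y₁ y₁ = S y₀ y₀ := by
  set k : Fin s → V := fun i => f (t₀ + c i * τ, Y i)
  have hstage : ∀ i, S (k i) (rkStep τ y₀ (a i) k) = 0 := fun i => by
    rw [rkStep, ← hY i]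
    exact hf _ _
  have hdefect : ∀ i j, symplecticDefect a b i j = 0 := fun i j => sub_eq_zero.mpr (hsymp i j)
  have hy₁' : y₁ = rkStep τ y₀ b k := hy₁
  simp [hy₁', S.apply_rkStep_self hS a, hstage, hdefect]

/-- Theorem 2.2 of [ELW06]: a symplectic Runge–Kutta method preserves every quadratic
invariant `S y y` of the (possibly nonautonomous) ODE `y' = f (t, y)`. -/
theorem symplectic_RK_preserves_quadratic_invariant_ODE
    {V : Type*} [NormedAddCommGroup V] [InnerProductSpace ℝ V]
    (S : V →ₗ[ℝ] V →ₗ[ℝ] ℝ) (hS : ∀ v w : V, S v w = S w v)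
    (f : ℝ × V → V) (hf : ∀ (t : ℝ) (y : V), S (f (t, y)) y = 0)
    (s : ℕ) (a : Fin s → Fin s → ℝ) (b : Fin s → ℝ)
    (hsymp : ∀ i j, b i * a i j + b j * a j i = b i * b j)
    (c : Fin s → ℝ) (hc : ∀ i, c i = ∑ j, a i j)
    (τ t₀ : ℝ) (y₀ : V) (Y : Fin s → V)
    (hY : ∀ i, Y i = y₀ + τ • ∑ j, a i j • f (t₀ + c j * τ, Y j))
    (y₁ : V) (hy₁ : y₁ = y₀ + τ • ∑ i, b i • f (t₀ + c i * τ, Y i)) :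
    S y₁ y₁ = S y₀ y₀ :=
  symplectic_RK_preserves_quadratic_invariant_ODE_general S hS f hf s a b hsymp c τ t₀ y₀ Y hY y₁
    hy₁
end

section
/- (Theorem 3.1, mass part.) Let N ∈ ℕ, let L : ℂ^N → ℂ^N be a Hermitian (self-adjoint) linear map, β ∈ ℝ, C₀ > 0, ρ(ψ) = √(Σ_j |ψ_j|⁴ + C₀), τ > 0. Let a : Fin s → Fin s → ℝ, b : Fin s → ℝ be Runge–Kutta coefficients satisfying the symplecticity condition b i * a i j + b j * a j i = b i * b j for all i, j, and set c i = Σ_j a i j. Given ψⁿ ∈ ℂ^N and qⁿ ∈ ℝ, suppose the stage values Ψ : Fin s → ℂ^N and Q : Fin s → ℝ satisfy Ψ i = exp(−i c i τ L) ψⁿ + τ Σ_j a i j • (exp(i (c j − c i) τ L) (k j)) and Q i = qⁿ + τ Σ_j a i j * l j, where k i = −i (β Q i / ρ(Ψ i)) • (|Ψ i|²Ψ i) and l i = (2 / ρ(Ψ i)) * Re⟨−i (L (Ψ i)), |Ψ i|²(Ψ i)⟩. Define ψⁿ⁺¹ = exp(−i τ L) ψⁿ + τ Σ_i b i • (exp(−i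 (1 − c i) τ L) (k i)). Then ⟨ψⁿ⁺¹, ψⁿ⁺¹⟩ = ⟨ψⁿ, ψⁿ⟩, i.e. the exponential SAV Runge–Kutta step preserves the discrete mass Mⁿ = ⟨ψⁿ, ψⁿ⟩. -/
open Finset Complex

/-- The componentwise cubic nonlinearity `|ψ|²ψ`. -/
noncomputable def nlVec {N : ℕ} (ψ : EuclideanSpace ℂ (Fin N)) : EuclideanSpace ℂ (Fin N) :=
  WithLp.toLp 2 (fun j => (‖ψ j‖ : ℂ) ^ 2 * ψ j)

/-- The inner product `⟨x, y⟩ = ∑ j, x j * conj (y j)` of the paper. -/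
noncomputable def pInner {N : ℕ} (x y : EuclideanSpace ℂ (Fin N)) : ℂ :=
  ∑ j, x j * (starRingEnd ℂ) (y j)

/-- The SAV denominator `ρ(ψ) = √(∑ j |ψ j|⁴ + C₀)`. -/
noncomputable def savRho {N : ℕ} (C₀ : ℝ) (ψ : EuclideanSpace ℂ (Fin N)) : ℝ :=
  Real.sqrt ((∑ j, ‖ψ j‖ ^ 4) + C₀)

/-! In the interaction picture `Kᵢ = exp(i cᵢ τ L) kᵢ` the ESAV-RK step is an ordinary Runge–Kutta
step `ψⁿ⁺¹ = exp(-i τ L) (ψⁿ + τ ∑ bᵢ Kᵢ)` whose stages are `exp(i cᵢ τ L) Ψᵢ = ψⁿ + τ ∑ aᵢⱼ Kⱼ`.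
As `L` is Hermitian these propagators are unitary, and as `kᵢ` is `i` times a real multiple of
`|Ψᵢ|²Ψᵢ`, each `Kᵢ` is real-orthogonal to its stage. A symplectic Runge–Kutta method preserves the
norm whenever every stage slope is orthogonal to its stage, since the symplecticity condition makes
the cross terms `2 τ ∑ bᵢ ⟪ψⁿ, Kᵢ⟫` cancel `τ² ‖∑ bᵢ Kᵢ‖²` exactly. -/

theorem sum_sum_mul_mul_eq_two_mul_of_symplectic {R ι : Type*} [CommRing R] [Fintype ι]
    {a : ι → ι → R} {b : ι → R} (hsymp : ∀ i j, b i * a i j + b j * a j i = b i * b j)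
    {G : ι → ι → R} (hG : ∀ i j, G i j = G j i) :
    ∑ i, ∑ j, b i * b j * G i j = 2 * ∑ i, ∑ j, b i * a i j * G i j := by
  have hswap : ∑ i, ∑ j, b j * a j i * G i j = ∑ i, ∑ j, b i * a i j * G i j := by
    rw [sum_comm]
    simp_rw [hG]
  calc ∑ i, ∑ j, b i * b j * G i j
      = ∑ i, ∑ j, (b i * a i j * G i j + b j * a j i * G i j) := by
        simp_rw [← hsymp, add_mul]
    _ = 2 * ∑ i, ∑ j, b i * a i j * G i j := by
        simp_rw [sum_add_distrib, hswap]
        ring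

open RealInnerProductSpace in
theorem norm_add_smul_sum_eq_of_symplectic {E ι : Type*} [NormedAddCommGroup E]
    [InnerProductSpace ℝ E] [Fintype ι] {a : ι → ι → ℝ} {b : ι → ℝ}
    (hsymp : ∀ i j, b i * a i j + b j * a j i = b i * b j) (h : ℝ) (y : E) (K : ι → E)
    (hK : ∀ i, ⟪K i, y + h • ∑ j, a i j • K j⟫ = 0) :
    ‖y + h • ∑ i, b i • K i‖ = ‖y‖ := by
  have hyK : ∀ i, ⟪y, K i⟫ = -(h * ∑ j, a i j * ⟪K i, K j⟫) := by
    intro i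
    have := hK i
    simp only [inner_add_right, inner_smul_right, inner_sum] at this
    rw [real_inner_comm]
    linarith
  have hw : ‖∑ i, b i • K i‖ ^ 2 = ∑ i, ∑ j, b i * b j * ⟪K i, K j⟫ := by
    rw [← real_inner_self_eq_norm_sq]
    simp only [sum_inner, inner_sum, inner_smul_left, inner_smul_right, mul_sum, conj_trivial,
      mul_assoc]
    rw [sum_comm]
    exact sum_congr rfl fun _ _ => sum_congr rfl fun _ _ => mul_left_comm _ _ _
  have hG := sum_sum_mul_mul_eq_two_mul_of_symplectic hsymp (G := fun i j => ⟪K i, K j⟫)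
    fun i j => real_inner_comm _ _
  have hyw : ∑ i, b i * ⟪y, K i⟫ = -h * ∑ i, ∑ j, b i * a i j * ⟪K i, K j⟫ := by
    simp only [hyK, mul_sum, ← sum_neg_distrib]
    exact sum_congr rfl fun _ _ => sum_congr rfl fun _ _ => by ring
  rw [← sq_eq_sq₀ (norm_nonneg _) (norm_nonneg _), norm_add_sq_real, norm_smul, mul_pow,
    Real.norm_eq_abs, sq_abs, hw, hG, inner_smul_right, inner_sum]
  simp only [inner_smul_right]
  rw [hyw]
  ring

section OperatorExponential

variable {E : Type*} [NormedAddCommGroup E] [NormedSpace ℂ E] [CompleteSpace E]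

theorem exp_smul_apply_exp_smul_apply (A : E →L[ℂ] E) (z w : ℂ) (x : E) :
    NormedSpace.exp (z • A) (NormedSpace.exp (w • A) x) =
      NormedSpace.exp ((z + w) • A) x := by
  let +nondep : NormedAlgebra ℚ (E →L[ℂ] E) := .restrictScalars ℚ ℂ _
  rw [add_smul, NormedSpace.exp_add_of_commute (((Commute.refl A).smul_left z).smul_right w)]
  rfl

theorem exp_smul_apply_add_smul_sum {ι : Type*} [Fintype ι] (A : E →L[ℂ] E) (z : ℂ) (x : E)
    (t : ℝ) (r : ι → ℝ) (w : ι → ℂ) (y : ι → E) :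
    NormedSpace.exp (z • A) (x + t • ∑ j, r j • NormedSpace.exp (w j • A) (y j)) =
      NormedSpace.exp (z • A) x + t • ∑ j, r j • NormedSpace.exp ((z + w j) • A) (y j) := by
  simp only [map_add, map_sum, ContinuousLinearMap.map_smul_of_tower,
    exp_smul_apply_exp_smul_apply]

end OperatorExponential

theorem exp_smul_mem_unitary {E : Type*} [NormedAddCommGroup E] [InnerProductSpace ℂ E]
    [CompleteSpace E] {A : E →L[ℂ] E} (hA : IsSelfAdjoint A) {z : ℂ} (hz : z.re = 0) :
    NormedSpace.exp (z • A) ∈ unitary (E →L[ℂ] E) := by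
  let +nondep : NormedAlgebra ℚ (E →L[ℂ] E) := .restrictScalars ℚ ℂ _
  refine NormedSpace.exp_mem_unitary_of_mem_skewAdjoint (hA.smul_mem_skewAdjoint ?_)
  simp [skewAdjoint.mem_iff, Complex.ext_iff, hz]

theorem pInner_eq_inner {N : ℕ} (x y : EuclideanSpace ℂ (Fin N)) :
    pInner x y = inner ℂ y x := by
  rw [pInner, PiLp.inner_apply]
  exact sum_congr rfl fun j _ => by simp [RCLike.inner_apply]

theorem isSelfAdjoint_of_pInner {N : ℕ}
    {L : EuclideanSpace ℂ (Fin N) →L[ℂ] EuclideanSpace ℂ (Fin N)}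
    (hL : ∀ x y, pInner (L x) y = pInner x (L y)) : IsSelfAdjoint L := by
  rw [ContinuousLinearMap.isSelfAdjoint_iff_isSymmetric]
  intro x y
  have := (hL y x).symm
  rwa [pInner_eq_inner, pInner_eq_inner] at this

theorem pInner_self {N : ℕ} (x : EuclideanSpace ℂ (Fin N)) :
    pInner x x = ((‖x‖ ^ 2 : ℝ) : ℂ) := by
  rw [pInner_eq_inner, inner_self_eq_norm_sq_to_K]
  push_cast; rfl

theorem inner_nlVec_self {N : ℕ} (ψ : EuclideanSpace ℂ (Fin N)) :
    inner ℂ (nlVec ψ) ψ = ((∑ j, ‖ψ j‖ ^ 4 : ℝ) : ℂ) := by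
  rw [PiLp.inner_apply]
  push_cast
  refine sum_congr rfl fun j _ => ?_
  simp only [nlVec, RCLike.inner_apply, map_mul, map_pow, Complex.conj_ofReal]
  rw [mul_left_comm, Complex.mul_conj']
  ring

theorem EuclideanSpace.real_inner_eq_re_inner {ι : Type*} [Fintype ι]
    (x y : EuclideanSpace ℂ ι) :
    inner ℝ x y = (inner ℂ x y).re := by
  simp [PiLp.inner_apply, Complex.re_sum, Complex.inner]

theorem real_inner_smul_nlVec_self {N : ℕ} {z : ℂ} (hz : z.re = 0)
    (ψ : EuclideanSpace ℂ (Fin N)) : inner ℝ (z • nlVec ψ) ψ = 0 := by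
  rw [EuclideanSpace.real_inner_eq_re_inner, inner_smul_left, inner_nlVec_self,
    Complex.re_mul_ofReal]
  simp [hz]

theorem ESAV_RK_mass_conservation_general {N : ℕ}
    (L : EuclideanSpace ℂ (Fin N) →L[ℂ] EuclideanSpace ℂ (Fin N))
    (hL : ∀ x y, pInner (L x) y = pInner x (L y))
    (β : ℝ) (C₀ : ℝ) (τ : ℝ)
    (s : ℕ) (a : Fin s → Fin s → ℝ) (b : Fin s → ℝ)
    (hsymp : ∀ i j, b i * a i j + b j * a j i = b i * b j)
    (c : Fin s → ℝ)
    (ψn : EuclideanSpace ℂ (Fin N))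
    (Ψ : Fin s → EuclideanSpace ℂ (Fin N)) (Q : Fin s → ℝ)
    (k : Fin s → EuclideanSpace ℂ (Fin N))
    (hk : ∀ i, k i = (-Complex.I * ((β * Q i / savRho C₀ (Ψ i) : ℝ) : ℂ)) • nlVec (Ψ i))
    (hΨ : ∀ i, Ψ i = NormedSpace.exp (((-Complex.I) * ((c i * τ : ℝ) : ℂ)) • L) ψn
        + τ • ∑ j, a i j •
            NormedSpace.exp ((Complex.I * (((c j - c i) * τ : ℝ) : ℂ)) • L) (k j))
    (ψn1 : EuclideanSpace ℂ (Fin N))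
    (hψn1 : ψn1 = NormedSpace.exp (((-Complex.I) * ((τ : ℝ) : ℂ)) • L) ψn
        + τ • ∑ i, b i •
            NormedSpace.exp (((-Complex.I) * (((1 - c i) * τ : ℝ) : ℂ)) • L) (k i)) :
    pInner ψn1 ψn1 = pInner ψn ψn := by
  have hLsa := isSelfAdjoint_of_pInner hL
  set U : ℂ → EuclideanSpace ℂ (Fin N) →L[ℂ] EuclideanSpace ℂ (Fin N) :=
    fun z => NormedSpace.exp (z • L)
  have hU : ∀ z : ℂ, z.re = 0 → U z ∈ unitary _ := fun _ => exp_smul_mem_unitary hLsa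
  set K : Fin s → EuclideanSpace ℂ (Fin N) := fun i => U (I * (c i * τ : ℝ)) (k i)
  have hstage : ∀ i, U (I * (c i * τ : ℝ)) (Ψ i) = ψn + τ • ∑ j, a i j • K j := by
    intro i
    have hexp : ∀ j, I * ↑(c i * τ) + I * ↑((c j - c i) * τ) = I * ↑(c j * τ) := fun j => by
      push_cast; ring
    rw [hΨ, exp_smul_apply_add_smul_sum, exp_smul_apply_exp_smul_apply, neg_mul,
      add_neg_cancel, zero_smul, NormedSpace.exp_zero]
    simp_rw [hexp]
    rfl
  have hstep : ψn1 = U (-I * τ) (ψn + τ • ∑ i, b i • K i) := by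
    have hexp : ∀ i, -I * τ + I * ↑(c i * τ) = -I * ↑((1 - c i) * τ) := fun i => by
      push_cast; ring
    rw [hψn1, exp_smul_apply_add_smul_sum]
    simp_rw [hexp]
  have hskew : ∀ i, inner ℝ (K i) (ψn + τ • ∑ j, a i j • K j) = 0 := by
    intro i
    rw [← hstage, EuclideanSpace.real_inner_eq_re_inner,
      ContinuousLinearMap.inner_map_map_of_mem_unitary (hU _ (by simp)),
      ← EuclideanSpace.real_inner_eq_re_inner, hk]
    exact real_inner_smul_nlVec_self (by simp) _
  rw [pInner_self, pInner_self, hstep,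
    ContinuousLinearMap.norm_map_of_mem_unitary (hU _ (by simp)),
    norm_add_smul_sum_eq_of_symplectic hsymp τ ψn K hskew]

/-- Theorem 3.1 (mass part): a symplectic ESAV-RK step preserves the discrete mass
`Mⁿ = ⟨ψⁿ, ψⁿ⟩`. -/
theorem ESAV_RK_mass_conservation {N : ℕ}
    (L : EuclideanSpace ℂ (Fin N) →L[ℂ] EuclideanSpace ℂ (Fin N))
    (hL : ∀ x y, pInner (L x) y = pInner x (L y))
    (β : ℝ) (C₀ : ℝ) (hC₀ : 0 < C₀) (τ : ℝ) (hτ : 0 < τ)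
    (s : ℕ) (a : Fin s → Fin s → ℝ) (b : Fin s → ℝ)
    (hsymp : ∀ i j, b i * a i j + b j * a j i = b i * b j)
    (c : Fin s → ℝ) (hc : ∀ i, c i = ∑ j, a i j)
    (ψn : EuclideanSpace ℂ (Fin N)) (qn : ℝ)
    (Ψ : Fin s → EuclideanSpace ℂ (Fin N)) (Q : Fin s → ℝ)
    (k : Fin s → EuclideanSpace ℂ (Fin N)) (l : Fin s → ℝ)
    (hk : ∀ i, k i = (-Complex.I * ((β * Q i / savRho C₀ (Ψ i) : ℝ) : ℂ)) • nlVec (Ψ i))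
    (hl : ∀ i, l i = (2 / savRho C₀ (Ψ i)) *
        (pInner ((-Complex.I) • L (Ψ i)) (nlVec (Ψ i))).re)
    (hΨ : ∀ i, Ψ i = NormedSpace.exp (((-Complex.I) * ((c i * τ : ℝ) : ℂ)) • L) ψn
        + τ • ∑ j, a i j •
            NormedSpace.exp ((Complex.I * (((c j - c i) * τ : ℝ) : ℂ)) • L) (k j))
    (hQ : ∀ i, Q i = qn + τ * ∑ j, a i j * l j)
    (ψn1 : EuclideanSpace ℂ (Fin N))
    (hψn1 : ψn1 = NormedSpace.exp (((-Complex.I) * ((τ : ℝ) : ℂ)) • L) ψn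
        + τ • ∑ i, b i •
            NormedSpace.exp (((-Complex.I) * (((1 - c i) * τ : ℝ) : ℂ)) • L) (k i)) :
    pInner ψn1 ψn1 = pInner ψn ψn :=
  ESAV_RK_mass_conservation_general L hL β C₀ τ s a b hsymp c ψn Ψ Q k hk hΨ ψn1 hψn1
end

section
/- Let N ∈ ℕ, C₀ > 0, and let ψ : ℝ → ℂ^N be differentiable. Define q : ℝ → ℝ by q(t) = √(Σ_j |ψ_j(t)|⁴ + C₀). Then q is differentiable and for all t, q'(t) = (2 / q(t)) * Re⟨ψ'(t), |ψ t|²(ψ t)⟩, where |ψ|²ψ = (|ψ_j|²ψ_j)_j and ⟨x,y⟩ = Σ_j x_j·conj(y_j). In particular, if ψ additionally satisfies the nonlinear Schrödinger ODE i ψ'(t) = L (ψ t) + β • (|ψ t|²(ψ t)) for a Hermitian linear map L : ℂ^N → ℂ^N and β ∈ ℝ, then the pair (ψ, q) satisfies the SAV system ψ'(t) = −i • (L (ψ t) + (β q t / ρ(ψ t)) • (|ψ t|²(ψ t))) and q'(t) = (2 / ρ(ψ t)) * Re⟨ψ'(t), |ψ t|²(ψ t)⟩, where ρ(ψ) = √(Σ_j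 |ψ_j|⁴ + C₀). -/
/-!
Since `C₀ > 0`, `q = √(∑ j |ψ j|⁴ + C₀)` is the square root of a positive differentiable function,
and `d/dt |ψ j|⁴ = 2 |ψ j|² · d/dt |ψ j|² = 4 |ψ j|² Re (ψ j' · conj (ψ j))`, so the chain rule gives
`q' = 4 Re⟨ψ', |ψ|²ψ⟩ / (2 q)`. Along any trajectory `q = ρ(ψ)`, so the factor `q / ρ(ψ)` in the
SAV system equals `1` and its first equation is the Schrödinger equation multiplied by `-i`.
-/

open Finset Complex

open scoped RealInnerProductSpace

theorem HasDerivAt.piLp_apply {ι : Type*} [Fintype ι] {E : ι → Type*}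
    [∀ i, NormedAddCommGroup (E i)] [∀ i, NormedSpace ℝ (E i)] {p : ENNReal} [Fact (1 ≤ p)]
    {f : ℝ → PiLp p E} {f' : PiLp p E} {t : ℝ} (hf : HasDerivAt f f' t) (i : ι) :
    HasDerivAt (fun s => f s i) (f' i) t :=
  (PiLp.hasFDerivAt_apply p (f t) i).comp_hasDerivAt t hf

theorem HasDerivAt.norm_pow_four {F : Type*} [NormedAddCommGroup F] [InnerProductSpace ℝ F]
    {f : ℝ → F} {f' : F} {t : ℝ} (hf : HasDerivAt f f' t) :
    HasDerivAt (fun s => ‖f s‖ ^ 4) (4 * (‖f t‖ ^ 2 * ⟪f t, f'⟫)) t := by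
  have h := hf.norm_sq.fun_pow 2
  simp only [← pow_mul] at h
  refine h.congr_deriv ?_
  push_cast
  ring

theorem re_pInner_nlVec {N : ℕ} (x y : EuclideanSpace ℂ (Fin N)) :
    (pInner x (nlVec y)).re = ∑ j, ‖y j‖ ^ 2 * ⟪y j, x j⟫ := by
  simp only [pInner, nlVec, Complex.re_sum, Complex.inner, map_mul, map_pow, conj_ofReal]
  refine Finset.sum_congr rfl fun j _ => ?_
  rw [← ofReal_pow, mul_left_comm, re_ofReal_mul]

theorem savRho_pos {N : ℕ} {C₀ : ℝ} (hC₀ : 0 < C₀) (ψ : EuclideanSpace ℂ (Fin N)) :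
    0 < savRho C₀ ψ :=
  Real.sqrt_pos.mpr (by positivity)

theorem hasDerivAt_savRho {N : ℕ} {C₀ : ℝ} (hC₀ : 0 < C₀) {ψ : ℝ → EuclideanSpace ℂ (Fin N)}
    {ψ' : EuclideanSpace ℂ (Fin N)} {t : ℝ} (hψ : HasDerivAt ψ ψ' t) :
    HasDerivAt (fun s => savRho C₀ (ψ s))
      (2 / savRho C₀ (ψ t) * (pInner ψ' (nlVec (ψ t))).re) t := by
  have hsum : HasDerivAt (fun s => (∑ j, ‖ψ s j‖ ^ 4) + C₀)
      (4 * (pInner ψ' (nlVec (ψ t))).re) t := by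
    rw [re_pInner_nlVec, Finset.mul_sum]
    exact (HasDerivAt.fun_sum fun j _ =>
      HasDerivAt.norm_pow_four (hψ.piLp_apply j)).add_const C₀
  have hpos : 0 < (∑ j, ‖ψ t j‖ ^ 4) + C₀ := by positivity
  refine (hsum.sqrt hpos.ne').congr_deriv ?_
  unfold savRho
  field_simp
  ring

/-- The auxiliary variable `q(t) = √(∑ j |ψ j(t)|⁴ + C₀)` is differentiable with
`q' = (2/q) Re⟨ψ', |ψ|²ψ⟩`; in particular, any solution of the nonlinear Schrödinger ODE
`i ψ' = Lψ + β |ψ|²ψ` together with this `q` solves the SAV reformulated system (7). -/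
theorem SAV_equivalence {N : ℕ} (C₀ : ℝ) (hC₀ : 0 < C₀)
    (ψ : ℝ → EuclideanSpace ℂ (Fin N)) (hψ : Differentiable ℝ ψ)
    (q : ℝ → ℝ) (hqdef : ∀ t, q t = Real.sqrt ((∑ j, ‖ψ t j‖ ^ 4) + C₀)) :
    Differentiable ℝ q ∧
    (∀ t, deriv q t = (2 / q t) * (pInner (deriv ψ t) (nlVec (ψ t))).re) ∧
    (∀ (L : EuclideanSpace ℂ (Fin N) →ₗ[ℂ] EuclideanSpace ℂ (Fin N)),
      (∀ x y, pInner (L x) y = pInner x (L y)) →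
      ∀ β : ℝ,
        (∀ t, Complex.I • deriv ψ t = L (ψ t) + (β : ℂ) • nlVec (ψ t)) →
        (∀ t, deriv ψ t = (-Complex.I) •
            (L (ψ t) + ((β * q t / savRho C₀ (ψ t) : ℝ) : ℂ) • nlVec (ψ t))) ∧
        (∀ t, deriv q t =
            (2 / savRho C₀ (ψ t)) * (pInner (deriv ψ t) (nlVec (ψ t))).re)) := by
  obtain rfl : q = fun t => savRho C₀ (ψ t) := funext hqdef
  have hq t := hasDerivAt_savRho hC₀ (hψ t).hasDerivAt
  refine ⟨fun t => (hq t).differentiableAt, fun t => (hq t).deriv,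
    fun L _ β hODE => ⟨fun t => ?_, fun t => (hq t).deriv⟩⟩
  rw [mul_div_assoc, div_self (savRho_pos hC₀ _).ne', mul_one, ← hODE t, smul_smul, neg_mul,
    I_mul_I, neg_neg, one_smul]
end

section
/- Let N ∈ ℕ, let L : ℂ^N → ℂ^N be a Hermitian linear map, β ∈ ℝ, C₀ > 0, ρ(ψ) = √(Σ_j |ψ_j|⁴ + C₀), τ > 0, n ∈ ℕ, tₙ = n τ. Let a : Fin s → Fin s → ℝ, b : Fin s → ℝ be Runge–Kutta coefficients and c i = Σ_j a i j. Suppose uⁿ ∈ ℂ^N, qⁿ ∈ ℝ, and stages U : Fin s → ℂ^N, Q : Fin s → ℝ satisfy the Runge–Kutta scheme for the Lawson-transformed system: U i = uⁿ + τ Σ_j a i j • k̃ j, Q i = qⁿ + τ Σ_j a i j * l j, with k̃ i = −i • exp(i (tₙ + c i τ) L) ((β Q i / ρ(V i)) • (|V i|²(V i))), l i = (2 / ρ(V i)) * Re⟨−i • (L (V i)), |V i|²(V i)⟩, where V i := exp(−i (tₙ + c i τ) L) (U i), and uⁿ⁺¹ = uⁿ + τ Σ_i b i • k̃ i, qⁿ⁺¹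 = qⁿ + τ Σ_i b i * l i. Define ψⁿ = exp(−i tₙ L) uⁿ, Ψ i = exp(−i (tₙ + c i τ) L) (U i), and k i = exp(−i (tₙ + c i τ) L) (k̃ i). Then the variables (ψⁿ, Ψ, Q, k, l) satisfy the ESAV-RK scheme: Ψ i = exp(−i c i τ L) ψⁿ + τ Σ_j a i j • (exp(i (c j − c i) τ L) (k j)), Q i = qⁿ + τ Σ_j a i j * l j, k i = −i (β Q i / ρ(Ψ i)) • (|Ψ i|²(Ψ i)), l i = (2 / ρ(Ψ i)) * Re⟨−i (L (Ψ i)), |Ψ i|²(Ψ i)⟩, and moreover exp(−i tₙ₊₁ L) uⁿ⁺¹ = exp(−i τ L) ψⁿ + τ Σ_i b i • (exp(−i (1 − c i) τ L) (k i)), where tₙ₊₁ = tₙ + τ. -/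
open Finset Complex

/-! All exponentials involved are exponentials of scalar multiples of the single operator `L`,
so they commute and compose by adding exponents. Applying `exp(−i(tₙ + cᵢτ)L)` to the Lawson
stage and update equations therefore only shifts the exponents, and cancels the factor
`exp(i(tₙ + cᵢτ)L)` in `k̃ᵢ`; the stage values `Vᵢ` at which the nonlinearity is evaluated are
exactly the `Ψᵢ`. -/

section ExpSMul

variable {𝕜 E : Type*} [RCLike 𝕜] [NormedAddCommGroup E] [NormedSpace 𝕜 E]
  [CompleteSpace E]

theorem exp_smul_apply_exp_smul_apply_of_add_eq (A : E →L[𝕜] E) {z w v : 𝕜}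
    (h : z + w = v) (x : E) :
    NormedSpace.exp (z • A) (NormedSpace.exp (w • A) x) = NormedSpace.exp (v • A) x := by
  have hcomm : Commute (z • A) (w • A) := ((Commute.refl A).smul_left z).smul_right w
  have hball (B : E →L[𝕜] E) :
      B ∈ Metric.eball 0 (NormedSpace.expSeries 𝕜 (E →L[𝕜] E)).radius :=
    (NormedSpace.expSeries_radius_eq_top 𝕜 (E →L[𝕜] E)).symm ▸ edist_lt_top _ _
  rw [← h, add_smul, NormedSpace.exp_add_of_commute_of_mem_ball hcomm (hball _) (hball _),
    mul_apply_eq_comp]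

theorem exp_smul_apply_exp_smul_apply_of_add_eq_zero (A : E →L[𝕜] E) {z w : 𝕜}
    (h : z + w = 0) (x : E) :
    NormedSpace.exp (z • A) (NormedSpace.exp (w • A) x) = x := by
  rw [exp_smul_apply_exp_smul_apply_of_add_eq A h, zero_smul, NormedSpace.exp_zero,
    one_apply_eq_self]

end ExpSMul

theorem RK_Lawson_to_ESAV_RK_general {N : ℕ}
    (L : EuclideanSpace ℂ (Fin N) →L[ℂ] EuclideanSpace ℂ (Fin N))
    (β : ℝ) (C₀ : ℝ) (τ : ℝ)
    (tn : ℝ)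
    (s : ℕ) (a : Fin s → Fin s → ℝ) (b : Fin s → ℝ)
    (c : Fin s → ℝ)
    (un : EuclideanSpace ℂ (Fin N)) (qn : ℝ)
    (U : Fin s → EuclideanSpace ℂ (Fin N)) (Q : Fin s → ℝ)
    (V : Fin s → EuclideanSpace ℂ (Fin N))
    (hV : ∀ i, V i = NormedSpace.exp
        (((-Complex.I) * ((tn + c i * τ : ℝ) : ℂ)) • L) (U i))
    (ktilde : Fin s → EuclideanSpace ℂ (Fin N)) (l : Fin s → ℝ)
    (hktilde : ∀ i, ktilde i = (-Complex.I) •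
        NormedSpace.exp ((Complex.I * ((tn + c i * τ : ℝ) : ℂ)) • L)
          (((β * Q i / savRho C₀ (V i) : ℝ) : ℂ) • nlVec (V i)))
    (hl : ∀ i, l i = (2 / savRho C₀ (V i)) *
        (pInner ((-Complex.I) • L (V i)) (nlVec (V i))).re)
    (hU : ∀ i, U i = un + τ • ∑ j, a i j • ktilde j)
    (hQ : ∀ i, Q i = qn + τ * ∑ j, a i j * l j)
    (un1 : EuclideanSpace ℂ (Fin N))
    (hun1 : un1 = un + τ • ∑ i, b i • ktilde i)
    (ψn : EuclideanSpace ℂ (Fin N))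
    (hψn : ψn = NormedSpace.exp (((-Complex.I) * ((tn : ℝ) : ℂ)) • L) un)
    (Ψ : Fin s → EuclideanSpace ℂ (Fin N))
    (hΨ : ∀ i, Ψ i = NormedSpace.exp
        (((-Complex.I) * ((tn + c i * τ : ℝ) : ℂ)) • L) (U i))
    (k : Fin s → EuclideanSpace ℂ (Fin N))
    (hk : ∀ i, k i = NormedSpace.exp
        (((-Complex.I) * ((tn + c i * τ : ℝ) : ℂ)) • L) (ktilde i)) :
    (∀ i, Ψ i = NormedSpace.exp (((-Complex.I) * ((c i * τ : ℝ) : ℂ)) • L) ψn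
        + τ • ∑ j, a i j •
            NormedSpace.exp ((Complex.I * (((c j - c i) * τ : ℝ) : ℂ)) • L) (k j)) ∧
    (∀ i, Q i = qn + τ * ∑ j, a i j * l j) ∧
    (∀ i, k i = (-Complex.I * ((β * Q i / savRho C₀ (Ψ i) : ℝ) : ℂ)) • nlVec (Ψ i)) ∧
    (∀ i, l i = (2 / savRho C₀ (Ψ i)) *
        (pInner ((-Complex.I) • L (Ψ i)) (nlVec (Ψ i))).re) ∧
    NormedSpace.exp (((-Complex.I) * ((tn + τ : ℝ) : ℂ)) • L) un1
      = NormedSpace.exp (((-Complex.I) * ((τ : ℝ) : ℂ)) • L) ψn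
        + τ • ∑ i, b i •
            NormedSpace.exp (((-Complex.I) * (((1 - c i) * τ : ℝ) : ℂ)) • L) (k i) := by
  have hVΨ : V = Ψ := funext fun i => by rw [hV, hΨ]
  subst hVΨ hψn
  refine ⟨fun i => ?_, hQ, fun i => ?_, hl, ?_⟩
  · simp only [hΨ i, hU i, hk, map_add, ContinuousLinearMap.map_smul_of_tower, map_sum]
    congr 1
    · exact (exp_smul_apply_exp_smul_apply_of_add_eq L (by push_cast; ring) un).symm
    · refine congrArg _ (sum_congr rfl fun j _ => congrArg _ ?_)
      exact (exp_smul_apply_exp_smul_apply_of_add_eq L (by push_cast; ring) _).symm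
  · rw [hk i, hktilde i, map_smul,
      exp_smul_apply_exp_smul_apply_of_add_eq_zero L (by push_cast; ring), mul_smul]
  · simp only [hun1, hk, map_add, ContinuousLinearMap.map_smul_of_tower, map_sum]
    congr 1
    · exact (exp_smul_apply_exp_smul_apply_of_add_eq L (by push_cast; ring) un).symm
    · refine congrArg _ (sum_congr rfl fun i _ => congrArg _ ?_)
      exact (exp_smul_apply_exp_smul_apply_of_add_eq L (by push_cast; ring) _).symm

/-- Section 3 of the paper: after manipulating the exponentials
(`ψⁿ = exp(−i tₙ L) uⁿ`, `Ψᵢ = exp(−i (tₙ + cᵢτ) L) Uᵢ`, `kᵢ = exp(−i (tₙ + cᵢτ) L) k̃ᵢ`),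
the Runge–Kutta discretization (13) of the Lawson-transformed system can be rewritten
as the exponential SAV Runge–Kutta scheme (14)–(15) in the original variable. -/
theorem RK_Lawson_to_ESAV_RK {N : ℕ}
    (L : EuclideanSpace ℂ (Fin N) →L[ℂ] EuclideanSpace ℂ (Fin N))
    (hL : ∀ x y, pInner (L x) y = pInner x (L y))
    (β : ℝ) (C₀ : ℝ) (hC₀ : 0 < C₀) (τ : ℝ) (hτ : 0 < τ) (n : ℕ)
    (tn : ℝ) (htn : tn = n * τ)
    (s : ℕ) (a : Fin s → Fin s → ℝ) (b : Fin s → ℝ)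
    (c : Fin s → ℝ) (hc : ∀ i, c i = ∑ j, a i j)
    (un : EuclideanSpace ℂ (Fin N)) (qn : ℝ)
    (U : Fin s → EuclideanSpace ℂ (Fin N)) (Q : Fin s → ℝ)
    (V : Fin s → EuclideanSpace ℂ (Fin N))
    (hV : ∀ i, V i = NormedSpace.exp
        (((-Complex.I) * ((tn + c i * τ : ℝ) : ℂ)) • L) (U i))
    (ktilde : Fin s → EuclideanSpace ℂ (Fin N)) (l : Fin s → ℝ)
    (hktilde : ∀ i, ktilde i = (-Complex.I) •
        NormedSpace.exp ((Complex.I * ((tn + c i * τ : ℝ) : ℂ)) • L)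
          (((β * Q i / savRho C₀ (V i) : ℝ) : ℂ) • nlVec (V i)))
    (hl : ∀ i, l i = (2 / savRho C₀ (V i)) *
        (pInner ((-Complex.I) • L (V i)) (nlVec (V i))).re)
    (hU : ∀ i, U i = un + τ • ∑ j, a i j • ktilde j)
    (hQ : ∀ i, Q i = qn + τ * ∑ j, a i j * l j)
    (un1 : EuclideanSpace ℂ (Fin N)) (qn1 : ℝ)
    (hun1 : un1 = un + τ • ∑ i, b i • ktilde i)
    (hqn1 : qn1 = qn + τ * ∑ i, b i * l i)
    (ψn : EuclideanSpace ℂ (Fin N))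
    (hψn : ψn = NormedSpace.exp (((-Complex.I) * ((tn : ℝ) : ℂ)) • L) un)
    (Ψ : Fin s → EuclideanSpace ℂ (Fin N))
    (hΨ : ∀ i, Ψ i = NormedSpace.exp
        (((-Complex.I) * ((tn + c i * τ : ℝ) : ℂ)) • L) (U i))
    (k : Fin s → EuclideanSpace ℂ (Fin N))
    (hk : ∀ i, k i = NormedSpace.exp
        (((-Complex.I) * ((tn + c i * τ : ℝ) : ℂ)) • L) (ktilde i)) :
    (∀ i, Ψ i = NormedSpace.exp (((-Complex.I) * ((c i * τ : ℝ) : ℂ)) • L) ψn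
        + τ • ∑ j, a i j •
            NormedSpace.exp ((Complex.I * (((c j - c i) * τ : ℝ) : ℂ)) • L) (k j)) ∧
    (∀ i, Q i = qn + τ * ∑ j, a i j * l j) ∧
    (∀ i, k i = (-Complex.I * ((β * Q i / savRho C₀ (Ψ i) : ℝ) : ℂ)) • nlVec (Ψ i)) ∧
    (∀ i, l i = (2 / savRho C₀ (Ψ i)) *
        (pInner ((-Complex.I) • L (Ψ i)) (nlVec (Ψ i))).re) ∧
    NormedSpace.exp (((-Complex.I) * ((tn + τ : ℝ) : ℂ)) • L) un1
      = NormedSpace.exp (((-Complex.I) * ((τ : ℝ) : ℂ)) • L) ψn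
        + τ • ∑ i, b i •
            NormedSpace.exp (((-Complex.I) * (((1 - c i) * τ : ℝ) : ℂ)) • L) (k i) :=
  RK_Lawson_to_ESAV_RK_general L β C₀ τ tn s a b c un qn U Q V hV ktilde l hktilde hl hU hQ un1 hun1
    ψn hψn Ψ hΨ k hk
end
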